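/- arXiv:2104.06867 — 6 statements merged into one kernel-verified Lean document; each statement's English description precedes it below -/
import Mathlib

section
/- Let A be an n×n nonnegative matrix and let A_l denote its strictly lower triangular part. Define A' = A_l^{J-1} + A_l^{J-2} + ... + A_l for some integer J ≥ 2, and let Ã = A + A'(A - I). If A is irreducible with spectral radius r = ρ(A) > 1, then ρ(Ã) ≥ ρ(A). -/
open Matrix

noncomputable def specRad {m : Type*} [Fintype m] [DecidableEq m]
    (M : Matrix m m ℝ) : ℝ :=
  sSup ((fun μ : ℂ => ‖μ‖) '' spectrum ℂ (M.map (algebraMap ℝ ℂ)))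

def MatReducible {n : ℕ} (M : Matrix (Fin n) (Fin n) ℝ) : Prop :=
  ∃ (σ : Equiv.Perm (Fin n)) (k : ℕ), 0 < k ∧ k < n ∧
    ∀ i j : Fin n, k ≤ (i : ℕ) → (j : ℕ) < k → M (σ i) (σ j) = 0

/-!
By the weak Perron–Frobenius theorem (take entrywise moduli of an eigenvector for an eigenvalue
of modulus `ρ(A)`) there is `x ≥ 0`, `x ≠ 0`, with `A x ≥ ρ(A) x`. As `ρ(A) ≥ 1`, `A x - x ≥ 0`,
so `Ã x = A x + A' (A x - x) ≥ ρ(A) x`. The matrix `Ã` is nonnegative because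
`A' (A_l - 1) = A_l ^ J - A_l` telescopes, giving `Ã = (A - A_l) + A' (A - A_l) + A_l ^ J`.
Finally a nonnegative `M` with `M x ≥ r x` satisfies `r ^ k ≤ ‖M ^ k‖` for the `ℓ∞` operator
norm, so `r ≤ ρ(M)` by Gelfand's formula.
-/

open Filter

theorem sum_Icc_one_pow_mul_sub_one {R : Type*} [Ring R] (x : R) (m : ℕ) :
    (∑ k ∈ Finset.Icc 1 m, x ^ k) * (x - 1) = x ^ (m + 1) - x := by
  induction m with
  | zero => simp
  | succ m ih =>
    rw [Finset.sum_Icc_succ_top (by omega), add_mul, ih, pow_succ x (m + 1)]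
    noncomm_ring

theorem spectrum.ofReal_le_spectralRadius_of_forall_pow_le_norm {A : Type*} [NormedRing A]
    [NormedAlgebra ℂ A] [CompleteSpace A] {a : A} {r : ℝ} (hr : 0 ≤ r)
    (h : ∀ k : ℕ, r ^ k ≤ ‖a ^ k‖) : ENNReal.ofReal r ≤ spectralRadius ℂ a := by
  refine ge_of_tendsto (spectrum.pow_norm_pow_one_div_tendsto_nhds_spectralRadius a) ?_
  filter_upwards [eventually_ge_atTop 1] with k hk
  refine ENNReal.ofReal_le_ofReal ?_
  calc r = (r ^ k) ^ (1 / k : ℝ) := by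
        rw [one_div, Real.pow_rpow_inv_natCast hr (by omega)]
    _ ≤ ‖a ^ k‖ ^ (1 / k : ℝ) := Real.rpow_le_rpow (pow_nonneg hr k) (h k) (by positivity)

theorem pi_norm_le_pi_norm_of_nonneg_of_le {m : Type*} [Fintype m] {u v : m → ℝ}
    (hu : 0 ≤ u) (h : u ≤ v) : ‖u‖ ≤ ‖v‖ :=
  (pi_norm_le_iff_of_nonneg (norm_nonneg v)).2 fun i =>
    calc ‖u i‖ = u i := Real.norm_of_nonneg (hu i)
      _ ≤ ‖v i‖ := (h i).trans (Real.le_norm_self _)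
      _ ≤ ‖v‖ := norm_le_pi_norm v i

namespace Matrix

variable {m : Type*} [Fintype m]

theorem mulVec_nonneg_of_nonneg {M : Matrix m m ℝ} (hM : ∀ i j, 0 ≤ M i j) {v : m → ℝ}
    (hv : 0 ≤ v) : 0 ≤ M *ᵥ v :=
  fun i => Finset.sum_nonneg fun j _ => mul_nonneg (hM i j) (hv j)

theorem mulVec_mono_of_nonneg {M : Matrix m m ℝ} (hM : ∀ i j, 0 ≤ M i j) {u v : m → ℝ}
    (h : u ≤ v) : M *ᵥ u ≤ M *ᵥ v := by
  simpa only [mulVec_sub, sub_nonneg] using mulVec_nonneg_of_nonneg hM (sub_nonneg.2 h)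

theorem mul_apply_nonneg {M N : Matrix m m ℝ} (hM : ∀ i j, 0 ≤ M i j)
    (hN : ∀ i j, 0 ≤ N i j) (i j : m) : 0 ≤ (M * N) i j :=
  Finset.sum_nonneg fun k _ => mul_nonneg (hM i k) (hN k j)

variable [DecidableEq m]

theorem pow_smul_le_pow_mulVec {M : Matrix m m ℝ} (hM : ∀ i j, 0 ≤ M i j) {x : m → ℝ}
    {r : ℝ} (hr : 0 ≤ r) (h : r • x ≤ M *ᵥ x) (k : ℕ) : r ^ k • x ≤ M ^ k *ᵥ x := by
  induction k with
  | zero => simp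
  | succ k ih =>
    calc r ^ (k + 1) • x = r ^ k • (r • x) := by rw [pow_succ, mul_smul]
      _ ≤ r ^ k • (M *ᵥ x) := smul_le_smul_of_nonneg_left h (pow_nonneg hr k)
      _ = M *ᵥ (r ^ k • x) := by rw [mulVec_smul]
      _ ≤ M *ᵥ (M ^ k *ᵥ x) := mulVec_mono_of_nonneg hM ih
      _ = M ^ (k + 1) *ᵥ x := by rw [mulVec_mulVec, pow_succ']

theorem sum_pow_apply_nonneg {N : Matrix m m ℝ} (hN : ∀ i j, 0 ≤ N i j) (s : Finset ℕ)
    (i j : m) : 0 ≤ (∑ l ∈ s, N ^ l) i j := by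
  rw [Matrix.sum_apply]
  exact Finset.sum_nonneg fun l _ => pow_apply_nonneg hN l i j

theorem add_geomSum_mul_sub_one_apply_nonneg {A N : Matrix m m ℝ} (hN : ∀ i j, 0 ≤ N i j)
    (hNA : ∀ i j, N i j ≤ A i j) (k : ℕ) (i j : m) :
    0 ≤ (A + (∑ l ∈ Finset.Icc 1 k, N ^ l) * (A - 1)) i j := by
  have hAN : ∀ i j, 0 ≤ (A - N) i j := fun i j => sub_nonneg.2 (hNA i j)
  have hsplit : A + (∑ l ∈ Finset.Icc 1 k, N ^ l) * (A - 1) =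
      (A - N) + (∑ l ∈ Finset.Icc 1 k, N ^ l) * (A - N) + N ^ (k + 1) := by
    rw [show A - 1 = (A - N) + (N - 1) by abel, mul_add, sum_Icc_one_pow_mul_sub_one]
    abel
  rw [hsplit, Matrix.add_apply, Matrix.add_apply]
  linarith [mul_apply_nonneg (sum_pow_apply_nonneg hN (Finset.Icc 1 k)) hAN i j,
    pow_apply_nonneg hN (k + 1) i j, hAN i j]

theorem smul_le_add_mul_sub_one_mulVec {A B : Matrix m m ℝ} (hB : ∀ i j, 0 ≤ B i j)
    {x : m → ℝ} (hx : 0 ≤ x) {r : ℝ} (hr : 1 ≤ r) (h : r • x ≤ A *ᵥ x) :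
    r • x ≤ (A + B * (A - 1)) *ᵥ x := by
  have hgap : 0 ≤ A *ᵥ x - x :=
    calc 0 ≤ (r - 1) • x := smul_nonneg (sub_nonneg.2 hr) hx
      _ = r • x - x := by rw [sub_smul, one_smul]
      _ ≤ A *ᵥ x - x := sub_le_sub_right h x
  calc r • x ≤ A *ᵥ x := h
    _ ≤ A *ᵥ x + B *ᵥ (A *ᵥ x - x) := le_add_of_nonneg_right (mulVec_nonneg_of_nonneg hB hgap)
    _ = (A + B * (A - 1)) *ᵥ x := by rw [add_mulVec, ← mulVec_mulVec, sub_mulVec, one_mulVec]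

section LinftyOpNorm

attribute [local instance] Matrix.linftyOpNormedRing Matrix.linftyOpNormedAlgebra

theorem linfty_opNorm_map_ofReal (M : Matrix m m ℝ) :
    ‖M.map (algebraMap ℝ ℂ)‖ = ‖M‖ := by
  simp [linfty_opNorm_def]

theorem pow_le_linfty_opNorm_pow {M : Matrix m m ℝ} (hM : ∀ i j, 0 ≤ M i j) {x : m → ℝ}
    (hx : 0 ≤ x) (hx0 : x ≠ 0) {r : ℝ} (hr : 0 ≤ r) (h : r • x ≤ M *ᵥ x) (k : ℕ) :
    r ^ k ≤ ‖M ^ k‖ := by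
  refine le_of_mul_le_mul_right ?_ (norm_pos_iff.2 hx0)
  calc r ^ k * ‖x‖ = ‖r ^ k • x‖ := by rw [norm_smul, Real.norm_of_nonneg (pow_nonneg hr k)]
    _ ≤ ‖M ^ k *ᵥ x‖ := pi_norm_le_pi_norm_of_nonneg_of_le (smul_nonneg (pow_nonneg hr k) hx)
        (pow_smul_le_pow_mulVec hM hr h k)
    _ ≤ ‖M ^ k‖ * ‖x‖ := linfty_opNorm_mulVec _ _

end LinftyOpNorm

end Matrix

section SpectralRadius

variable {m : Type*} [Fintype m] [DecidableEq m]

attribute [local instance] Matrix.linftyOpNormedRing Matrix.linftyOpNormedAlgebra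

theorem specRad_nonneg (M : Matrix m m ℝ) : 0 ≤ specRad M :=
  Real.sSup_nonneg fun _ ⟨_, _, h⟩ => h ▸ norm_nonneg _

theorem specRad_of_isEmpty [IsEmpty m] (M : Matrix m m ℝ) : specRad M = 0 := by
  rw [specRad, spectrum.of_subsingleton, Set.image_empty, Real.sSup_empty]

theorem isCompact_norm_spectrum (M : Matrix m m ℝ) :
    IsCompact ((fun μ : ℂ => ‖μ‖) '' spectrum ℂ (M.map (algebraMap ℝ ℂ))) :=
  have := FiniteDimensional.complete ℂ (Matrix m m ℂ)
  (spectrum.isCompact _).image continuous_norm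

theorem spectralRadius_le_ofReal_specRad (M : Matrix m m ℝ) :
    spectralRadius ℂ (M.map (algebraMap ℝ ℂ)) ≤ ENNReal.ofReal (specRad M) := by
  have := FiniteDimensional.complete ℂ (Matrix m m ℂ)
  have hbdd := (isCompact_norm_spectrum M).bddAbove
  refine iSup₂_le fun μ hμ => ?_
  rw [← ENNReal.ofReal_coe_nnreal]
  exact ENNReal.ofReal_le_ofReal (le_csSup hbdd ⟨μ, hμ, rfl⟩)

theorem le_specRad_of_smul_le_mulVec {M : Matrix m m ℝ} (hM : ∀ i j, 0 ≤ M i j)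
    {x : m → ℝ} (hx : 0 ≤ x) (hx0 : x ≠ 0) {r : ℝ} (hr : 0 ≤ r) (h : r • x ≤ M *ᵥ x) :
    r ≤ specRad M := by
  have := FiniteDimensional.complete ℂ (Matrix m m ℂ)
  have hgrowth : ∀ k : ℕ, r ^ k ≤ ‖M.map (algebraMap ℝ ℂ) ^ k‖ := fun k => by
    rw [← RingHom.mapMatrix_apply, ← map_pow, RingHom.mapMatrix_apply,
      linfty_opNorm_map_ofReal]
    exact pow_le_linfty_opNorm_pow hM hx hx0 hr h k
  refine (ENNReal.ofReal_le_ofReal_iff (specRad_nonneg M)).1 ?_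
  exact (spectrum.ofReal_le_spectralRadius_of_forall_pow_le_norm hr hgrowth).trans
    (spectralRadius_le_ofReal_specRad M)

theorem exists_eigenvector_norm_eq_specRad [Nonempty m] (M : Matrix m m ℝ) :
    ∃ (μ : ℂ) (v : m → ℂ), v ≠ 0 ∧ M.map (algebraMap ℝ ℂ) *ᵥ v = μ • v ∧
      ‖μ‖ = specRad M := by
  have := FiniteDimensional.complete ℂ (Matrix m m ℂ)
  obtain ⟨μ, hμ, hnorm⟩ := (isCompact_norm_spectrum M).sSup_mem
    ((spectrum.nonempty (M.map (algebraMap ℝ ℂ))).image _)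
  rw [← spectrum_toLin', ← Module.End.hasEigenvalue_iff_mem_spectrum] at hμ
  obtain ⟨v, hv⟩ := hμ.exists_hasEigenvector
  exact ⟨μ, v, hv.2, by simpa using Module.End.mem_eigenspace_iff.1 hv.1, hnorm⟩

theorem exists_nonneg_specRad_smul_le_mulVec [Nonempty m] {M : Matrix m m ℝ}
    (hM : ∀ i j, 0 ≤ M i j) : ∃ x : m → ℝ, 0 ≤ x ∧ x ≠ 0 ∧ specRad M • x ≤ M *ᵥ x := by
  obtain ⟨μ, v, hv0, hv, hμ⟩ := exists_eigenvector_norm_eq_specRad M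
  refine ⟨fun i => ‖v i‖, fun i => norm_nonneg _, fun h => hv0 ?_, fun i => ?_⟩
  · funext i; simpa using congrFun h i
  calc specRad M * ‖v i‖ = ‖∑ j, M.map (algebraMap ℝ ℂ) i j * v j‖ := by
        rw [← hμ, ← norm_mul, ← smul_eq_mul, ← Pi.smul_apply, ← hv]; rfl
    _ ≤ ∑ j, ‖M.map (algebraMap ℝ ℂ) i j * v j‖ := norm_sum_le _ _
    _ = (M *ᵥ fun j => ‖v j‖) i := by
        simp [mulVec, dotProduct, abs_of_nonneg (hM _ _)]

end SpectralRadius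

theorem stmt1_general {n : ℕ} (A : Matrix (Fin n) (Fin n) ℝ)
    (hA : ∀ i j, 0 ≤ A i j)
    (J : ℕ)
    (Al : Matrix (Fin n) (Fin n) ℝ)
    (hAl : ∀ i j, Al i j = if (j : ℕ) < (i : ℕ) then A i j else 0)
    (A' : Matrix (Fin n) (Fin n) ℝ)
    (hA' : A' = ∑ k ∈ Finset.Icc 1 (J - 1), Al ^ k)
    (hr : 1 < specRad A) :
    specRad A ≤ specRad (A + A' * (A - 1)) := by
  have : Nonempty (Fin n) := by
    by_contra h
    rw [not_nonempty_iff] at h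
    linarith [specRad_of_isEmpty A]
  have hAl_nonneg : ∀ i j, 0 ≤ Al i j := fun i j => by
    rw [hAl]; split_ifs <;> simp [hA]
  have hAl_le : ∀ i j, Al i j ≤ A i j := fun i j => by
    rw [hAl]; split_ifs <;> simp [hA]
  subst hA'
  obtain ⟨x, hx, hx0, hAx⟩ := exists_nonneg_specRad_smul_le_mulVec hA
  exact le_specRad_of_smul_le_mulVec
    (add_geomSum_mul_sub_one_apply_nonneg hAl_nonneg hAl_le (J - 1)) hx hx0 (by linarith)
    (smul_le_add_mul_sub_one_mulVec (sum_pow_apply_nonneg hAl_nonneg _) hx hr.le hAx)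

theorem stmt1 {n : ℕ} (A : Matrix (Fin n) (Fin n) ℝ)
    (hA : ∀ i j, 0 ≤ A i j)
    (J : ℕ) (hJ : 2 ≤ J)
    (Al : Matrix (Fin n) (Fin n) ℝ)
    (hAl : ∀ i j, Al i j = if (j : ℕ) < (i : ℕ) then A i j else 0)
    (A' : Matrix (Fin n) (Fin n) ℝ)
    (hA' : A' = ∑ k ∈ Finset.Icc 1 (J - 1), Al ^ k)
    (hirr : ¬ MatReducible A)
    (hr : 1 < specRad A) :
    specRad A ≤ specRad (A + A' * (A - 1)) :=
  stmt1_general A hA J Al hAl A' hA' hr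
end

section
/- Let A = A_l + A_u be an n×n matrix decomposed into its lower-triangular part A_l (including possibly the diagonal, here diagonal is zero) and strictly upper-triangular part A_u, written in a 3×3 block form with zero diagonal blocks: A has blocks A_{1,2}, A_{1,3}, A_{2,1}, A_{2,3}, A_{3,1}, A_{3,2}. Define the layered matrices 𝒜_1, 𝒜_2, 𝒜_3 where 𝒜_j equals the identity in all diagonal blocks except that its j-th block row equals the j-th block row of A with zero diagonal block. Let Ã = 𝒜_3 𝒜_2 𝒜_1. If μ is an eigenvalue of Ã with right eigenvector u, then (μ A_l + A_u) u = μ u. -/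
/-!
Write `z₀ = u`, `z₁ = 𝒜₁ z₀`, `z₂ = 𝒜₂ z₁` and `μ u = 𝒜₃ z₂`. The layer matrix `𝒜ⱼ` changes only
the `j`-th block of a vector, so reading the chain backwards gives
`zⱼ = (μ u on the blocks before j, u on the others)`, while the `j`-th block of `zⱼ₊₁` is both
`μ u` and the `j`-th block of `A zⱼ`. As the diagonal blocks of `A` vanish, the `j`-th block of
`A zⱼ` is the `j`-th block of `(μ A_l + A_u) u`.
-/

open Matrix

namespace Matrix

variable {ι κ R S : Type*} [LinearOrder κ] [CommRing R] [CommRing S]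

def strictBlockLower (B : Matrix ι ι R) (L : ι → κ) : Matrix ι ι R :=
  of fun i k => if L k < L i then B i k else 0

def strictBlockUpper (B : Matrix ι ι R) (L : ι → κ) : Matrix ι ι R :=
  of fun i k => if L i < L k then B i k else 0

theorem strictBlockLower_map (B : Matrix ι ι R) (L : ι → κ) (f : R →+* S) :
    (strictBlockLower B L).map f = strictBlockLower (B.map f) L := by
  ext i k
  simp only [strictBlockLower, map_apply, of_apply]
  split_ifs <;> simp

theorem strictBlockUpper_map (B : Matrix ι ι R) (L : ι → κ) (f : R →+* S) :
    (strictBlockUpper B L).map f = strictBlockUpper (B.map f) L := by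
  ext i k
  simp only [strictBlockUpper, map_apply, of_apply]
  split_ifs <;> simp

def scaleBelow (L : ι → κ) (j : κ) (μ : R) (u : ι → R) : ι → R :=
  fun k => if L k < j then μ * u k else u k

variable [DecidableEq ι]

def layerMatrix (B : Matrix ι ι R) (L : ι → κ) (j : κ) : Matrix ι ι R :=
  of fun i k => if L i = j then B i k else if i = k then 1 else 0

theorem layerMatrix_map (B : Matrix ι ι R) (L : ι → κ) (j : κ) (f : R →+* S) :
    (layerMatrix B L j).map f = layerMatrix (B.map f) L j := by
  ext i k
  simp only [layerMatrix, map_apply, of_apply]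
  split_ifs <;> simp

variable [Fintype ι]

theorem layerMatrix_mulVec_apply_of_eq (B : Matrix ι ι R) {L : ι → κ} {j : κ} (x : ι → R)
    {i : ι} (hi : L i = j) : (layerMatrix B L j *ᵥ x) i = (B *ᵥ x) i := by
  simp [layerMatrix, mulVec, dotProduct, hi]

theorem layerMatrix_mulVec_apply_of_ne (B : Matrix ι ι R) {L : ι → κ} {j : κ} (x : ι → R)
    {i : ι} (hi : L i ≠ j) : (layerMatrix B L j *ᵥ x) i = x i := by
  simp [layerMatrix, mulVec, dotProduct, hi, ite_mul]

omit [DecidableEq ι] in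
theorem mulVec_scaleBelow_apply {B : Matrix ι ι R} {L : ι → κ}
    (hB : ∀ i k, L i = L k → B i k = 0) (μ : R) (u : ι → R) (i : ι) :
    (B *ᵥ scaleBelow L (L i) μ u) i = ((μ • strictBlockLower B L + strictBlockUpper B L) *ᵥ u) i := by
  simp only [mulVec, dotProduct, add_apply, smul_apply, strictBlockLower, strictBlockUpper, scaleBelow,
    of_apply, smul_eq_mul]
  refine Finset.sum_congr rfl fun k _ => ?_
  rcases lt_trichotomy (L k) (L i) with hlt | heq | hgt
  · simp only [hlt, ↓reduceIte, hlt.not_gt, add_zero]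
    ring
  · simp [heq, hB i k heq.symm]
  · simp [hgt, hgt.not_gt]

theorem mulVec_eq_smul_of_three_layers {B : Matrix ι ι R} {L : ι → Fin 3}
    (hB : ∀ i k, L i = L k → B i k = 0) {μ : R} {u v w : ι → R}
    (hv : layerMatrix B L 0 *ᵥ u = v) (hw : layerMatrix B L 1 *ᵥ v = w)
    (hμ : layerMatrix B L 2 *ᵥ w = μ • u) :
    (μ • strictBlockLower B L + strictBlockUpper B L) *ᵥ u = μ • u := by
  have layer_cases (k : ι) : L k = 0 ∨ L k = 1 ∨ L k = 2 := by omega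
  have hu_v (k : ι) (hk : L k ≠ 0) : v k = u k := hv ▸ layerMatrix_mulVec_apply_of_ne B u hk
  have hv_w (k : ι) (hk : L k ≠ 1) : w k = v k := hw ▸ layerMatrix_mulVec_apply_of_ne B v hk
  have hw_μu (k : ι) (hk : L k ≠ 2) : w k = μ * u k :=
    (layerMatrix_mulVec_apply_of_ne B w hk).symm.trans (congrFun hμ k)
  have hw_scale : w = scaleBelow L 2 μ u := by
    funext k
    unfold scaleBelow
    split_ifs with hk
    · exact hw_μu k (by omega)
    · exact (hv_w k (by omega)).trans (hu_v k (by omega))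
  have hv_scale : v = scaleBelow L 1 μ u := by
    funext k
    unfold scaleBelow
    split_ifs with hk
    · exact (hv_w k (by omega)).symm.trans (hw_μu k (by omega))
    · exact hu_v k (by omega)
  funext i
  rw [← mulVec_scaleBelow_apply hB]
  rcases layer_cases i with hi | hi | hi <;> rw [hi]
  · have hu_scale : scaleBelow L 0 μ u = u := funext fun k => if_neg (Fin.not_lt_zero _)
    rw [hu_scale, ← layerMatrix_mulVec_apply_of_eq B u hi, hv, hv_scale]
    simp [scaleBelow, hi]
  · rw [← hv_scale, ← layerMatrix_mulVec_apply_of_eq B v hi, hw, hw_scale]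
    simp [scaleBelow, hi]
  · rw [← hw_scale, ← layerMatrix_mulVec_apply_of_eq B w hi, hμ]

end Matrix

theorem stmt8_general {n : ℕ} (A : Matrix (Fin n) (Fin n) ℝ) (L : Fin n → Fin 3)
    (hdiag : ∀ i j, L i = L j → A i j = 0)
    (Al Au : Matrix (Fin n) (Fin n) ℝ)
    (hAl : ∀ i j, Al i j = if L j < L i then A i j else 0)
    (hAu : ∀ i j, Au i j = if L i < L j then A i j else 0)
    (lay : Fin 3 → Matrix (Fin n) (Fin n) ℝ)
    (hlay : ∀ j i k, (lay j) i k = if L i = j then A i k else if i = k then 1 else 0)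
    (μ : ℂ) (u : Fin n → ℂ)
    (heig : ((lay 2 * lay 1 * lay 0).map (algebraMap ℝ ℂ)).mulVec u = μ • u) :
    (μ • (Al.map (algebraMap ℝ ℂ)) + Au.map (algebraMap ℝ ℂ)).mulVec u = μ • u := by
  obtain rfl : lay = layerMatrix A L := funext fun j => Matrix.ext (hlay j)
  obtain rfl : Al = strictBlockLower A L := Matrix.ext hAl
  obtain rfl : Au = strictBlockUpper A L := Matrix.ext hAu
  rw [Matrix.map_mul, Matrix.map_mul, layerMatrix_map, layerMatrix_map, layerMatrix_map,
    ← mulVec_mulVec, ← mulVec_mulVec] at heig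
  rw [strictBlockLower_map, strictBlockUpper_map]
  exact mulVec_eq_smul_of_three_layers (fun i k h => by simp [hdiag i k h]) rfl rfl heig

theorem stmt8 {n : ℕ} (A : Matrix (Fin n) (Fin n) ℝ) (L : Fin n → Fin 3)
    (hdiag : ∀ i j, L i = L j → A i j = 0)
    (Al Au : Matrix (Fin n) (Fin n) ℝ)
    (hAl : ∀ i j, Al i j = if L j < L i then A i j else 0)
    (hAu : ∀ i j, Au i j = if L i < L j then A i j else 0)
    (lay : Fin 3 → Matrix (Fin n) (Fin n) ℝ)
    (hlay : ∀ j i k, (lay j) i k = if L i = j then A i k else if i = k then 1 else 0)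
    (μ : ℂ) (u : Fin n → ℂ) (hu : u ≠ 0)
    (heig : ((lay 2 * lay 1 * lay 0).map (algebraMap ℝ ℂ)).mulVec u = μ • u) :
    (μ • (Al.map (algebraMap ℝ ℂ)) + Au.map (algebraMap ℝ ℂ)).mulVec u = μ • u :=
  stmt8_general A L hdiag Al Au hAl hAu lay hlay μ u heig
end

section
/- With the setup of the 3-layer construction (A = A_l + A_u with zero diagonal blocks, 𝒜_1, 𝒜_2, 𝒜_3 as defined), let Ã' = 𝒜_1 𝒜_2 𝒜_3 be the product with the layer order reversed. If μ' is an eigenvalue of Ã' with right eigenvector u', then (A_l + μ' A_u) u' = μ' u'. -/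
/-!
Put `v = 𝒜₃ u` and `w = 𝒜₂ v`, so that `𝒜₁ w = μ u`. Each `𝒜ⱼ` changes only the `j`-th block
of a vector, so `w = μ u` on blocks 2 and 3, and `v` equals `u` on blocks 1, 2 and `μ u` on
block 3.
Hence in every block row `i` the vector that `A` is applied to (`w`, `v`, `u` for `i = 1, 2, 3`)
agrees with `u` on the earlier blocks and with `μ u` on the later ones, and the `i`-th block of
`A` vanishes; so row `i` of the eigen-equation reads `μ uᵢ = ((A_l + μ A_u) u)ᵢ`.
-/

open Matrix

section LayeredSystem

variable {ι α R : Type*} [Fintype ι] [CommRing R]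

lemma mulVec_apply_of_eq_rowBlock [DecidableEq ι] [DecidableEq α] {A 𝒜 : Matrix ι ι R}
    {L : ι → α} {j : α}
    (h𝒜 : ∀ i k, 𝒜 i k = if L i = j then A i k else if i = k then 1 else 0)
    (x : ι → R) (k : ι) :
    (𝒜 *ᵥ x) k = if L k = j then (A *ᵥ x) k else x k := by
  split_ifs with hk
  · simp only [mulVec, dotProduct, h𝒜, hk, if_true]
  · simp [mulVec, dotProduct, h𝒜, hk]

lemma mulVec_apply_eq_add_smul_mulVec_apply [LinearOrder α] {A Al Au : Matrix ι ι R}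
    {L : ι → α} (hdiag : ∀ i j, L i = L j → A i j = 0)
    (hAl : ∀ i j, Al i j = if L j < L i then A i j else 0)
    (hAu : ∀ i j, Au i j = if L i < L j then A i j else 0)
    {μ : R} {u x : ι → R} {i : ι}
    (hlo : ∀ l, L l < L i → x l = u l) (hhi : ∀ l, L i < L l → x l = μ * u l) :
    (A *ᵥ x) i = ((Al + μ • Au) *ᵥ u) i := by
  simp only [mulVec, dotProduct, Matrix.add_apply, Matrix.smul_apply, smul_eq_mul]
  refine Finset.sum_congr rfl fun l _ => ?_
  rcases lt_trichotomy (L l) (L i) with h | h | h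
  · simp [hAl, hAu, h, h.not_gt, hlo l h]
  · simp [hAl, hAu, h, hdiag i l h.symm]
  · rw [hAl, hAu, if_neg h.not_gt, if_pos h, hhi l h]
    ring

theorem add_smul_mulVec_eq_smul_of_mul_mul_mulVec_eq_smul [DecidableEq ι]
    {A Al Au : Matrix ι ι R} {L : ι → Fin 3} (hdiag : ∀ i j, L i = L j → A i j = 0)
    (hAl : ∀ i j, Al i j = if L j < L i then A i j else 0)
    (hAu : ∀ i j, Au i j = if L i < L j then A i j else 0)
    {lay : Fin 3 → Matrix ι ι R}
    (hlay : ∀ j i k, (lay j) i k = if L i = j then A i k else if i = k then 1 else 0)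
    {μ : R} {u : ι → R} (heig : (lay 0 * lay 1 * lay 2) *ᵥ u = μ • u) :
    (Al + μ • Au) *ᵥ u = μ • u := by
  have hrow := fun j => mulVec_apply_of_eq_rowBlock (hlay j)
  have hsplit {x i} :=
    mulVec_apply_eq_add_smul_mulVec_apply hdiag hAl hAu (μ := μ) (u := u) (x := x) (i := i)
  set v := lay 2 *ᵥ u
  set w := lay 1 *ᵥ v
  have hw_top : lay 0 *ᵥ w = μ • u := by
    simpa only [w, v, mulVec_mulVec, Matrix.mul_assoc] using heig
  have hw : ∀ k, L k ≠ 0 → w k = μ * u k := fun k hk => by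
    simpa [hrow 0 w k, hk] using congrFun hw_top k
  have hv_lo : ∀ k, L k ≠ 2 → v k = u k := fun k hk => by simp [v, hrow 2 u k, hk]
  have hv_hi : ∀ k, L k = 2 → v k = μ * u k := fun k hk => by
    rw [← hw k (by simp [hk])]
    simp [w, hrow 1 v k, hk]
  ext i
  rw [Pi.smul_apply, smul_eq_mul]
  obtain hi | hi | hi : L i = 0 ∨ L i = 1 ∨ L i = 2 := by omega
  · rw [← hsplit (x := w) (fun l hl => by omega) fun l hl => hw l (by omega)]
    simpa [hrow 0 w i, hi] using congrFun hw_top i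
  · rw [← hsplit (x := v) (fun l hl => hv_lo l (by omega)) fun l hl => hv_hi l (by omega),
      ← hw i (by simp [hi])]
    simp [w, hrow 1 v i, hi]
  · rw [← hsplit (x := u) (fun _ _ => rfl) fun l hl => by omega, ← hv_hi i hi]
    simp [v, hrow 2 u i, hi]

end LayeredSystem

theorem stmt9_general {n : ℕ} (A : Matrix (Fin n) (Fin n) ℝ) (L : Fin n → Fin 3)
    (hdiag : ∀ i j, L i = L j → A i j = 0)
    (Al Au : Matrix (Fin n) (Fin n) ℝ)
    (hAl : ∀ i j, Al i j = if L j < L i then A i j else 0)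
    (hAu : ∀ i j, Au i j = if L i < L j then A i j else 0)
    (lay : Fin 3 → Matrix (Fin n) (Fin n) ℝ)
    (hlay : ∀ j i k, (lay j) i k = if L i = j then A i k else if i = k then 1 else 0)
    (μ : ℂ) (u : Fin n → ℂ)
    (heig : ((lay 0 * lay 1 * lay 2).map (algebraMap ℝ ℂ)).mulVec u = μ • u) :
    (Al.map (algebraMap ℝ ℂ) + μ • (Au.map (algebraMap ℝ ℂ))).mulVec u = μ • u := by
  set f := algebraMap ℝ ℂ
  refine add_smul_mulVec_eq_smul_of_mul_mul_mulVec_eq_smul (A := A.map f) (L := L)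
    (lay := fun j => (lay j).map f)
    (fun i j h => by simp [hdiag i j h]) (fun i j => by simp [hAl, apply_ite f])
    (fun i j => by simp [hAu, apply_ite f]) (fun j i k => by simp [hlay, apply_ite f]) ?_
  simpa only [Matrix.map_mul] using heig

theorem stmt9 {n : ℕ} (A : Matrix (Fin n) (Fin n) ℝ) (L : Fin n → Fin 3)
    (hdiag : ∀ i j, L i = L j → A i j = 0)
    (Al Au : Matrix (Fin n) (Fin n) ℝ)
    (hAl : ∀ i j, Al i j = if L j < L i then A i j else 0)
    (hAu : ∀ i j, Au i j = if L i < L j then A i j else 0)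
    (lay : Fin 3 → Matrix (Fin n) (Fin n) ℝ)
    (hlay : ∀ j i k, (lay j) i k = if L i = j then A i k else if i = k then 1 else 0)
    (μ : ℂ) (u : Fin n → ℂ) (hu : u ≠ 0)
    (heig : ((lay 0 * lay 1 * lay 2).map (algebraMap ℝ ℂ)).mulVec u = μ • u) :
    (Al.map (algebraMap ℝ ℂ) + μ • (Au.map (algebraMap ℝ ℂ))).mulVec u = μ • u :=
  stmt9_general A L hdiag Al Au hAl hAu lay hlay μ u heig
end

section
/- With the setup of the 3-layer construction, the products à = 𝒜_3 𝒜_2 𝒜_1 and Ã' = 𝒜_1 𝒜_2 𝒜_3 have the same eigenvalues, provided there exists an involutive permutation matrix P (P = Pᵀ, P² = I) such that A_l P = P A_uᵀ and A_u P = P A_lᵀ. -/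
/-!
Both products are Gauss–Seidel sweeps over the three layers, in opposite orders:
`Ã = Al Ã + Au` and `Ã' = Au Ã' + Al`. Since `Al` and `Au` are nilpotent, `z` is an eigenvalue
of `Ã` exactly when `det (z (1 - Al) - Au) = 0`, and of `Ã'` exactly when
`det (z (1 - Au) - Al) = 0`. The map `M ↦ P Mᵀ P` preserves determinants and, by the hypothesis
on `P`, exchanges `Al` and `Au`, hence these two pencils.
-/

open Matrix

variable {ι : Type*} [DecidableEq ι]

section Layers

variable {R : Type*} [Semiring R] {p : ℕ}

def layerUpdate (A : Matrix ι ι R) (L : ι → Fin p) (j : ℕ) : Matrix ι ι R :=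
  of fun i k => if (L i : ℕ) = j then A i k else (1 : Matrix ι ι R) i k

lemma layer_eq_layerUpdate {A : Matrix ι ι R} {L : ι → Fin p} {lay : Fin p → Matrix ι ι R}
    (hlay : ∀ j i k, (lay j) i k = if L i = j then A i k else if i = k then 1 else 0)
    {f : Fin p → Fin p} (hf : Function.Injective f) (j : Fin p) :
    lay j = layerUpdate A (f ∘ L) (f j) := by
  ext i k
  simp [layerUpdate, hlay, one_apply, Fin.val_inj, hf.eq_iff]

variable [Fintype ι]

def sweep (A : Matrix ι ι R) (L : ι → Fin p) : ℕ → Matrix ι ι R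
  | 0 => 1
  | l + 1 => layerUpdate A L l * sweep A L l

lemma layerUpdate_mul_apply (A M : Matrix ι ι R) (L : ι → Fin p) (j : ℕ) (i k : ι) :
    (layerUpdate A L j * M) i k = if (L i : ℕ) = j then (A * M) i k else M i k := by
  split_ifs with h <;> simp [layerUpdate, mul_apply, h, one_apply]

lemma sweep_apply (A : Matrix ι ι R) (L : ι → Fin p) (l : ℕ) (m k : ι) :
    sweep A L l m k =
      if (L m : ℕ) < l then (A * sweep A L (L m)) m k else (1 : Matrix ι ι R) m k := by
  induction l with
  | zero => simp [sweep]
  | succ l ih =>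
    rw [sweep, layerUpdate_mul_apply]
    by_cases h : (L m : ℕ) = l
    · simp [h]
    · rw [if_neg h, ih]
      congr 1
      exact propext (by omega)

/-- After a full sweep, every row is computed from the final values of the lower layers and the
initial values of the upper layers. -/
theorem sweep_eq_lower_mul_sweep_add_upper (A Al Au : Matrix ι ι R) (L : ι → Fin p)
    (hdiag : ∀ i j, L i = L j → A i j = 0)
    (hAl : ∀ i j, Al i j = if L j < L i then A i j else 0)
    (hAu : ∀ i j, Au i j = if L i < L j then A i j else 0) :
    sweep A L p = Al * sweep A L p + Au := by
  ext m k
  have hfinal : ∀ x, sweep A L p x k = (A * sweep A L (L x)) x k := fun x => by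
    rw [sweep_apply, if_pos (L x).isLt]
  have hterm : ∀ x, A m x * sweep A L (L m) x k
      = Al m x * sweep A L p x k + Au m x * (1 : Matrix ι ι R) x k := fun x => by
    rw [sweep_apply, hAl, hAu, hfinal]
    rcases lt_trichotomy (L x) (L m) with h | h | h
    · simp [h, h.not_gt, Fin.lt_def.mp h]
    · simp [hdiag m x h.symm, h]
    · simp [h, h.not_gt, (Fin.lt_def.mp h).not_gt]
  rw [hfinal, Matrix.add_apply, ← mul_one Au]
  simp only [mul_apply, ← Finset.sum_add_distrib, hterm]

lemma pow_apply_eq_zero_of_lt_add (M : Matrix ι ι R) (L : ι → Fin p)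
    (hM : ∀ i j, ¬ L j < L i → M i j = 0) (k : ℕ) (i j : ι)
    (hij : (L i : ℕ) < L j + k) : (M ^ k) i j = 0 := by
  induction k generalizing j with
  | zero =>
    rw [pow_zero, one_apply_ne]
    rintro rfl
    omega
  | succ k ih =>
    rw [pow_succ, mul_apply]
    refine Finset.sum_eq_zero fun m _ => ?_
    by_cases hjm : L j < L m
    · rw [ih m (by rw [Fin.lt_def] at hjm; omega), zero_mul]
    · rw [hM m j hjm, mul_zero]

lemma isNilpotent_of_strictly_lower (M : Matrix ι ι R) (L : ι → Fin p)
    (hM : ∀ i j, ¬ L j < L i → M i j = 0) : IsNilpotent M :=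
  ⟨p, ext fun i j => pow_apply_eq_zero_of_lt_add M L hM p i j (by omega)⟩

end Layers

variable [Fintype ι]

section Spectrum

variable {K : Type*} [Field K]

lemma mem_spectrum_iff_det_smul_sub_eq_zero {M N G : Matrix ι ι K} (hM : IsUnit M)
    (hG : M * G = N) (z : K) : z ∈ spectrum K G ↔ (z • M - N).det = 0 := by
  have hpencil : z • M - N = M * (z • 1 - G) := by
    rw [mul_sub, hG, mul_smul_comm, mul_one]
  rw [spectrum.mem_iff, Algebra.algebraMap_eq_smul_one, isUnit_iff_isUnit_det,
    isUnit_iff_ne_zero, not_not, hpencil, det_mul, mul_eq_zero,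
    or_iff_right ((isUnit_iff_isUnit_det M).mp hM).ne_zero]

lemma det_mul_transpose_mul_of_mul_self_eq_one {P : Matrix ι ι K} (hP : P * P = 1)
    (M : Matrix ι ι K) : (P * Mᵀ * P).det = M.det := by
  have hdetP : P.det * P.det = 1 := by rw [← det_mul, hP, det_one]
  rw [det_mul, det_mul, det_transpose, mul_right_comm, hdetP, one_mul]

theorem spectrum_eq_of_transpose_conj_swap {P Al Au G G' : Matrix ι ι K} (hP : P * P = 1)
    (hlP : Al * P = P * Auᵀ) (huP : Au * P = P * Alᵀ)
    (hl : IsUnit (1 - Al)) (hu : IsUnit (1 - Au))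
    (hG : G = Al * G + Au) (hG' : G' = Au * G' + Al) :
    spectrum K G = spectrum K G' := by
  have hconj : ∀ {X Y : Matrix ι ι K}, X * P = P * Yᵀ → P * Yᵀ * P = X := fun h => by
    rw [← h, mul_assoc, hP, mul_one]
  have hswap : ∀ z : K, P * (z • (1 - Al) - Au)ᵀ * P = z • (1 - Au) - Al := fun z => by
    simp only [transpose_sub, transpose_smul, transpose_one, mul_sub, sub_mul, mul_smul_comm,
      smul_mul_assoc, mul_one, hP, hconj huP, hconj hlP]
  ext z
  rw [mem_spectrum_iff_det_smul_sub_eq_zero hl (by rw [sub_mul, one_mul, sub_eq_of_eq_add' hG]) z,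
    mem_spectrum_iff_det_smul_sub_eq_zero hu (by rw [sub_mul, one_mul, sub_eq_of_eq_add' hG']) z,
    ← hswap, det_mul_transpose_mul_of_mul_self_eq_one hP]

end Spectrum

theorem stmt10_general {n : ℕ} (A : Matrix (Fin n) (Fin n) ℝ) (L : Fin n → Fin 3)
    (hdiag : ∀ i j, L i = L j → A i j = 0)
    (Al Au : Matrix (Fin n) (Fin n) ℝ)
    (hAl : ∀ i j, Al i j = if L j < L i then A i j else 0)
    (hAu : ∀ i j, Au i j = if L i < L j then A i j else 0)
    (lay : Fin 3 → Matrix (Fin n) (Fin n) ℝ)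
    (hlay : ∀ j i k, (lay j) i k = if L i = j then A i k else if i = k then 1 else 0)
    (P : Matrix (Fin n) (Fin n) ℝ)
    (hP2 : P * P = 1)
    (hlP : Al * P = P * Auᵀ) (huP : Au * P = P * Alᵀ) :
    spectrum ℂ ((lay 2 * lay 1 * lay 0).map (algebraMap ℝ ℂ))
      = spectrum ℂ ((lay 0 * lay 1 * lay 2).map (algebraMap ℝ ℂ)) := by
  have hsweep : lay 2 * lay 1 * lay 0 = sweep A L 3 := by
    simp only [sweep, layer_eq_layerUpdate hlay Function.injective_id, mul_one, mul_assoc]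
    rfl
  have hsweep' : lay 0 * lay 1 * lay 2 = sweep A (Fin.rev ∘ L) 3 := by
    simp only [sweep, layer_eq_layerUpdate hlay Fin.rev_injective, mul_one, mul_assoc]
    rfl
  have hG := sweep_eq_lower_mul_sweep_add_upper A Al Au L hdiag hAl hAu
  have hG' := sweep_eq_lower_mul_sweep_add_upper A Au Al (Fin.rev ∘ L)
    (fun i j h => hdiag i j (Fin.rev_injective h))
    (fun i j => by simp [hAu, Fin.rev_lt_rev]) (fun i j => by simp [hAl, Fin.rev_lt_rev])
  have hnil := isNilpotent_of_strictly_lower Al L fun i j h => by rw [hAl, if_neg h]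
  have hnil' := isNilpotent_of_strictly_lower Au (Fin.rev ∘ L) fun i j h => by
    rw [hAu, if_neg (by simpa [Fin.rev_lt_rev] using h)]
  let φ := (algebraMap ℝ ℂ).mapMatrix (m := Fin n)
  have hφT : ∀ M : Matrix (Fin n) (Fin n) ℝ, φ Mᵀ = (φ M)ᵀ := fun M =>
    (transpose_map (f := algebraMap ℝ ℂ) (M := M)).symm
  change spectrum ℂ (φ _) = spectrum ℂ (φ _)
  rw [hsweep, hsweep']
  refine spectrum_eq_of_transpose_conj_swap (P := φ P) (Al := φ Al) (Au := φ Au)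
    (by rw [← map_mul, hP2, map_one]) (by rw [← map_mul, ← hφT, ← map_mul, hlP])
    (by rw [← map_mul, ← hφT, ← map_mul, huP]) (hnil.map φ).isUnit_one_sub
    (hnil'.map φ).isUnit_one_sub (by rw [← map_mul, ← map_add, ← hG])
    (by rw [← map_mul, ← map_add, ← hG'])

theorem stmt10 {n : ℕ} (A : Matrix (Fin n) (Fin n) ℝ) (L : Fin n → Fin 3)
    (hnonneg : ∀ i j, 0 ≤ A i j)
    (hdiag : ∀ i j, L i = L j → A i j = 0)
    (Al Au : Matrix (Fin n) (Fin n) ℝ)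
    (hAl : ∀ i j, Al i j = if L j < L i then A i j else 0)
    (hAu : ∀ i j, Au i j = if L i < L j then A i j else 0)
    (lay : Fin 3 → Matrix (Fin n) (Fin n) ℝ)
    (hlay : ∀ j i k, (lay j) i k = if L i = j then A i k else if i = k then 1 else 0)
    (P : Matrix (Fin n) (Fin n) ℝ)
    (hPperm : ∃ σ : Equiv.Perm (Fin n), P = (Equiv.toPEquiv σ).toMatrix)
    (hPsym : Pᵀ = P) (hP2 : P * P = 1)
    (hlP : Al * P = P * Auᵀ) (huP : Au * P = P * Alᵀ) :
    spectrum ℂ ((lay 2 * lay 1 * lay 0).map (algebraMap ℝ ℂ))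
      = spectrum ℂ ((lay 0 * lay 1 * lay 2).map (algebraMap ℝ ℂ)) :=
  stmt10_general A L hdiag Al Au hAl hAu lay hlay P hP2 hlP huP
end

section
/- Let M be an n×n nonnegative matrix (n ≥ 1). Then ρ(M) is an eigenvalue of M (i.e., M has a real nonnegative eigenvalue equal to its spectral radius), and there is a nonnegative (nonzero) eigenvector of M corresponding to ρ(M). -/
/-!
For a positive matrix `A`, the largest `r` with `r • u ≤ A *ᵥ u` for some `u` in the standard
simplex (the top of the Collatz–Wielandt set) exists by compactness, and a maximiser `u` is an
eigenvector: otherwise `A *ᵥ u - r • u` is nonnegative and nonzero, so `A` maps it to a strictly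
positive vector, and `A *ᵥ u` admits a larger constant.

A nonnegative matrix is the limit of the positive matrices `A + (k + 1)⁻¹ • 𝟙`; their Perron pairs
accumulate at an eigenpair `(r, u)` of `A`, and `r` still bounds the Collatz–Wielandt set of `A`,
which contains `‖μ‖` for every complex eigenvalue `μ` (take the moduli of an eigenvector and use the
triangle inequality). Hence `r` is the spectral radius.
-/

open Matrix

open Filter Topology

namespace Matrix

theorem exists_tendsto_pos_of_nonneg {m n : Type*} {A : Matrix m n ℝ} (hA : ∀ i j, 0 ≤ A i j) :
    ∃ B : ℕ → Matrix m n ℝ, Tendsto B atTop (𝓝 A) ∧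
      ∀ k i j, 0 < B k i j ∧ A i j ≤ B k i j ∧ B k i j ≤ A i j + 1 := by
  refine ⟨fun k => A + ((k : ℝ) + 1)⁻¹ • of fun _ _ => 1, ?_, fun k i j => ?_⟩
  · have h := (tendsto_one_div_add_atTop_nhds_zero_nat (𝕜 := ℝ)).smul_const
      (of fun (_ : m) (_ : n) => (1 : ℝ))
    rw [zero_smul] at h
    simpa only [one_div, add_zero] using tendsto_const_nhds.add h
  have hε : 0 < ((k : ℝ) + 1)⁻¹ := by positivity
  have hε₁ : ((k : ℝ) + 1)⁻¹ ≤ 1 := inv_le_one_of_one_le₀ (by simp)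
  simp only [add_apply, smul_apply, of_apply, smul_eq_mul, mul_one]
  exact ⟨add_pos_of_nonneg_of_pos (hA i j) hε, by linarith, by linarith⟩

variable {ι : Type*} [Fintype ι]

theorem mem_spectrum_iff_exists_mulVec_eq_smul {K : Type*} [Field K] [DecidableEq ι]
    (A : Matrix ι ι K) (μ : K) : μ ∈ spectrum K A ↔ ∃ v, v ≠ 0 ∧ A *ᵥ v = μ • v := by
  rw [← spectrum_toLin', ← Module.End.hasEigenvalue_iff_mem_spectrum]
  refine ⟨fun h => ?_, fun ⟨v, hv, h⟩ => ?_⟩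
  · obtain ⟨v, hv⟩ := h.exists_hasEigenvector
    exact ⟨v, hv.2, Module.End.mem_eigenspace_iff.mp hv.1⟩
  · exact Module.End.hasEigenvalue_of_hasEigenvector ⟨Module.End.mem_eigenspace_iff.mpr h, hv⟩

theorem map_mem_spectrum_map {K L : Type*} [Field K] [Field L] [DecidableEq ι] (f : K →+* L)
    {A : Matrix ι ι K} {μ : K} (hμ : μ ∈ spectrum K A) : f μ ∈ spectrum L (A.map f) := by
  obtain ⟨v, hv, hAv⟩ := (mem_spectrum_iff_exists_mulVec_eq_smul A μ).1 hμ
  refine (mem_spectrum_iff_exists_mulVec_eq_smul _ _).2 ⟨f ∘ v, ?_, funext fun i => ?_⟩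
  · exact fun h => hv (funext fun i => f.injective (by simpa using congrFun h i))
  · rw [← RingHom.map_mulVec, hAv]
    simp

section OrderedSemiring

variable {m R : Type*} [Semiring R] [PartialOrder R] [IsOrderedRing R]
  {A B : Matrix m ι R} {w : ι → R}

theorem mulVec_nonneg (hA : ∀ i j, 0 ≤ A i j) (hw : 0 ≤ w) : 0 ≤ A *ᵥ w :=
  fun i => Finset.sum_nonneg fun j _ => mul_nonneg (hA i j) (hw j)

theorem mulVec_mono_left (hAB : ∀ i j, A i j ≤ B i j) (hw : 0 ≤ w) : A *ᵥ w ≤ B *ᵥ w :=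
  fun i => Finset.sum_le_sum fun j _ => mul_le_mul_of_nonneg_right (hAB i j) (hw j)

end OrderedSemiring

section StrictOrderedSemiring

variable {m R : Type*} [Semiring R] [PartialOrder R] [IsStrictOrderedRing R] {A : Matrix m ι R}
  {w : ι → R}

theorem mulVec_pos (hA : ∀ i j, 0 < A i j) (hw : 0 < w) (i : m) : 0 < (A *ᵥ w) i := by
  obtain ⟨hw, j, hj⟩ := Pi.lt_def.1 hw
  exact Finset.sum_pos' (fun k _ => mul_nonneg (hA i k).le (hw k))
    ⟨j, Finset.mem_univ j, mul_pos (hA i j) hj⟩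

end StrictOrderedSemiring

theorem pos_of_mem_stdSimplex {u : ι → ℝ} (hu : u ∈ stdSimplex ℝ ι) : 0 < u := by
  refine lt_of_le_of_ne (fun i => hu.1 i) ?_
  rintro rfl
  simp [stdSimplex] at hu

theorem exists_gt_forall_mul_lt {κ : Type*} [Finite κ] {x y : κ → ℝ} {r : ℝ}
    (h : ∀ i, r * x i < y i) : ∃ c > r, ∀ i, c * x i < y i := by
  have hnear : ∀ᶠ c in 𝓝 r, ∀ i, c * x i < y i := eventually_all.2 fun i =>
    (continuous_id.mul continuous_const).continuousAt.eventually_lt continuousAt_const (h i)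
  obtain ⟨c, hc, hcr⟩ := ((hnear.filter_mono nhdsWithin_le_nhds).and self_mem_nhdsWithin).exists
    (f := 𝓝[>] r)
  exact ⟨c, hcr, hc⟩

def collatzWielandtSet (A : Matrix ι ι ℝ) : Set ℝ :=
  {c | ∃ w, 0 < w ∧ c • w ≤ A *ᵥ w}

variable {A : Matrix ι ι ℝ}

theorem collatzWielandtSet_mono {B : Matrix ι ι ℝ} (hAB : ∀ i j, A i j ≤ B i j) :
    collatzWielandtSet A ⊆ collatzWielandtSet B :=
  fun _ ⟨w, hw, h⟩ => ⟨w, hw, h.trans (mulVec_mono_left hAB hw.le)⟩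

theorem zero_mem_collatzWielandtSet [Nonempty ι] (hA : ∀ i j, 0 ≤ A i j) :
    0 ∈ collatzWielandtSet A :=
  ⟨1, zero_lt_one, by simpa using mulVec_nonneg hA zero_le_one⟩

theorem mem_collatzWielandtSet_of_mulVec_eq_smul {r : ℝ} {u : ι → ℝ} (hu : 0 < u)
    (hAu : A *ᵥ u = r • u) : r ∈ collatzWielandtSet A :=
  ⟨u, hu, hAu.ge⟩

theorem exists_mem_stdSimplex_of_mem_collatzWielandtSet {c : ℝ} (hc : c ∈ collatzWielandtSet A) :
    ∃ x ∈ stdSimplex ℝ ι, c • x ≤ A *ᵥ x := by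
  obtain ⟨w, hw, h⟩ := hc
  have hs : 0 < ∑ i, w i := Fintype.sum_pos hw
  refine ⟨(∑ i, w i)⁻¹ • w, ⟨fun i => mul_nonneg (inv_nonneg.2 hs.le) (hw.le i), ?_⟩, ?_⟩
  · simp [← Finset.mul_sum, hs.ne']
  · rw [smul_comm, mulVec_smul]
    exact smul_le_smul_of_nonneg_left h (inv_nonneg.2 hs.le)

theorem le_sum_of_mem_collatzWielandtSet (hA : ∀ i j, 0 ≤ A i j) {c : ℝ}
    (hc : c ∈ collatzWielandtSet A) : c ≤ ∑ i, ∑ j, A i j := by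
  obtain ⟨x, hx, h⟩ := exists_mem_stdSimplex_of_mem_collatzWielandtSet hc
  calc c = ∑ i, c * x i := by rw [← Finset.mul_sum, hx.2, mul_one]
    _ ≤ ∑ i, (A *ᵥ x) i := Finset.sum_le_sum fun i _ => h i
    _ ≤ ∑ i, ∑ j, A i j := Finset.sum_le_sum fun i _ => Finset.sum_le_sum fun j _ =>
      mul_le_of_le_one_right (hA i j) (mem_Icc_of_mem_stdSimplex hx j).2

theorem exists_isGreatest_collatzWielandtSet [Nonempty ι] (hA : ∀ i j, 0 ≤ A i j) :
    ∃ r, IsGreatest (collatzWielandtSet A) r ∧ ∃ u ∈ stdSimplex ℝ ι, r • u ≤ A *ᵥ u := by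
  set T := {p ∈ Set.Icc 0 (∑ i, ∑ j, A i j) ×ˢ stdSimplex ℝ ι | p.1 • p.2 ≤ A *ᵥ p.2}
  have hT : IsCompact T := (isCompact_Icc.prod (isCompact_stdSimplex ℝ ι)).inter_right
    (isClosed_le (by fun_prop) (continuous_const.matrix_mulVec continuous_snd))
  have hmem : ∀ c ∈ collatzWielandtSet A, 0 ≤ c → c ∈ Prod.fst '' T := fun c hc hc0 => by
    obtain ⟨x, hx, h⟩ := exists_mem_stdSimplex_of_mem_collatzWielandtSet hc
    exact ⟨(c, x), ⟨⟨⟨hc0, le_sum_of_mem_collatzWielandtSet hA hc⟩, hx⟩, h⟩, rfl⟩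
  obtain ⟨_, ⟨⟨r, u⟩, ⟨⟨hr, hu⟩, hru⟩, rfl⟩, hgreatest⟩ :=
    (hT.image continuous_fst).exists_isGreatest ⟨0, hmem 0 (zero_mem_collatzWielandtSet hA) le_rfl⟩
  refine ⟨r, ⟨⟨u, pos_of_mem_stdSimplex hu, hru⟩, fun c hc => ?_⟩, u, hu, hru⟩
  rcases le_total c 0 with hc0 | hc0
  · exact hc0.trans hr.1
  · exact hgreatest (hmem c hc hc0)

theorem mulVec_eq_smul_of_isGreatest {r : ℝ} (hA : ∀ i j, 0 < A i j)
    (hr : IsGreatest (collatzWielandtSet A) r) {u : ι → ℝ} (hu : 0 < u) (hru : r • u ≤ A *ᵥ u) :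
    A *ᵥ u = r • u := by
  by_contra hne
  set y := A *ᵥ u
  have hgap : ∀ i, r * y i < (A *ᵥ y) i := fun i => by
    have := mulVec_pos hA ((sub_nonneg.2 hru).lt_of_ne (sub_ne_zero.2 hne).symm) i
    rwa [mulVec_sub, mulVec_smul, Pi.sub_apply, Pi.smul_apply, smul_eq_mul, sub_pos] at this
  obtain ⟨c, hcr, hc⟩ := exists_gt_forall_mul_lt hgap
  have hy : 0 < y := Pi.lt_def.2 ⟨fun i => (mulVec_pos hA hu i).le,
    (Pi.lt_def.1 hu).2.imp fun i _ => mulVec_pos hA hu i⟩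
  exact hcr.not_ge (hr.2 ⟨y, hy, fun i => (hc i).le⟩)

theorem exists_perron_of_pos [Nonempty ι] (hA : ∀ i j, 0 < A i j) :
    ∃ r, IsGreatest (collatzWielandtSet A) r ∧ ∃ u ∈ stdSimplex ℝ ι, A *ᵥ u = r • u := by
  obtain ⟨r, hr, u, hu, hru⟩ := exists_isGreatest_collatzWielandtSet fun i j => (hA i j).le
  exact ⟨r, hr, u, hu, mulVec_eq_smul_of_isGreatest hA hr (pos_of_mem_stdSimplex hu) hru⟩

theorem exists_perron_of_nonneg [Nonempty ι] (hA : ∀ i j, 0 ≤ A i j) :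
    ∃ r, IsGreatest (collatzWielandtSet A) r ∧ ∃ u ∈ stdSimplex ℝ ι, A *ᵥ u = r • u := by
  obtain ⟨B, hB_lim, hB⟩ := exists_tendsto_pos_of_nonneg hA
  have hB_pos : ∀ k i j, 0 < B k i j := fun k i j => (hB k i j).1
  choose r hr u hu hBu using fun k => exists_perron_of_pos (hB_pos k)
  have hr_le : ∀ k, r k ≤ ∑ i, ∑ j, (A i j + 1) := fun k =>
    (le_sum_of_mem_collatzWielandtSet (fun i j => (hB_pos k i j).le) (hr k).1).trans
      (Finset.sum_le_sum fun i _ => Finset.sum_le_sum fun j _ => (hB k i j).2.2)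
  have hbound : ∀ k, (r k, u k) ∈ Set.Icc 0 (∑ i, ∑ j, (A i j + 1)) ×ˢ stdSimplex ℝ ι :=
    fun k => ⟨⟨(hr k).2 (zero_mem_collatzWielandtSet fun i j => (hB_pos k i j).le), hr_le k⟩, hu k⟩
  obtain ⟨⟨r₀, u₀⟩, ⟨-, hu₀⟩, φ, hφ, hlim⟩ :=
    (isCompact_Icc.prod (isCompact_stdSimplex ℝ ι)).tendsto_subseq hbound
  have hr_lim : Tendsto (r ∘ φ) atTop (𝓝 r₀) := (continuous_fst.tendsto _).comp hlim
  have hu_lim : Tendsto (u ∘ φ) atTop (𝓝 u₀) := (continuous_snd.tendsto _).comp hlim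
  have hAu₀ : A *ᵥ u₀ = r₀ • u₀ := by
    have hmul : Continuous fun p : Matrix ι ι ℝ × (ι → ℝ) => p.1 *ᵥ p.2 :=
      continuous_fst.matrix_mulVec continuous_snd
    have h₁ : Tendsto (fun k => B (φ k) *ᵥ u (φ k)) atTop (𝓝 (A *ᵥ u₀)) :=
      (hmul.tendsto (A, u₀)).comp ((hB_lim.comp hφ.tendsto_atTop).prodMk_nhds hu_lim)
    have h₂ : Tendsto (fun k => B (φ k) *ᵥ u (φ k)) atTop (𝓝 (r₀ • u₀)) := by
      simp only [hBu]
      exact hr_lim.smul hu_lim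
    exact tendsto_nhds_unique h₁ h₂
  refine ⟨r₀, ⟨mem_collatzWielandtSet_of_mulVec_eq_smul (pos_of_mem_stdSimplex hu₀) hAu₀,
    fun c hc => ge_of_tendsto' hr_lim fun k => (hr (φ k)).2 ?_⟩, u₀, hu₀, hAu₀⟩
  exact collatzWielandtSet_mono (fun i j => (hB (φ k) i j).2.1) hc

theorem norm_mem_collatzWielandtSet [DecidableEq ι] (hA : ∀ i j, 0 ≤ A i j) {μ : ℂ}
    (hμ : μ ∈ spectrum ℂ (A.map (algebraMap ℝ ℂ))) : ‖μ‖ ∈ collatzWielandtSet A := by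
  obtain ⟨x, hx, hAx⟩ := (mem_spectrum_iff_exists_mulVec_eq_smul _ _).1 hμ
  refine ⟨fun i => ‖x i‖, lt_of_le_of_ne (fun i => norm_nonneg (x i)) fun h => hx ?_, fun i => ?_⟩
  · exact funext fun i => norm_eq_zero.1 (congrFun h i).symm
  calc ‖μ‖ * ‖x i‖ = ‖∑ j, (A i j : ℂ) * x j‖ := by
        rw [← norm_mul, ← smul_eq_mul, ← Pi.smul_apply, ← hAx]; rfl
    _ ≤ ∑ j, ‖(A i j : ℂ) * x j‖ := norm_sum_le _ _
    _ = (A *ᵥ fun i => ‖x i‖) i := by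
        simp [mulVec, dotProduct, Complex.norm_real, abs_of_nonneg (hA _ _)]

theorem specRad_eq_of_isGreatest [DecidableEq ι] [Nonempty ι] (hA : ∀ i j, 0 ≤ A i j) {r : ℝ}
    (hr : IsGreatest (collatzWielandtSet A) r) (hr_spec : r ∈ spectrum ℝ A) : specRad A = r := by
  refine IsGreatest.csSup_eq ⟨⟨(r : ℂ), map_mem_spectrum_map (algebraMap ℝ ℂ) hr_spec, ?_⟩, ?_⟩
  · simp [abs_of_nonneg (hr.2 (zero_mem_collatzWielandtSet hA))]
  · rintro _ ⟨μ, hμ, rfl⟩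
    exact hr.2 (norm_mem_collatzWielandtSet hA hμ)

end Matrix

theorem stmt13 {n : ℕ} (hn : 0 < n) (M : Matrix (Fin n) (Fin n) ℝ)
    (hM : ∀ i j, 0 ≤ M i j) :
    specRad M ∈ spectrum ℝ M ∧
    ∃ v : Fin n → ℝ, v ≠ 0 ∧ (∀ i, 0 ≤ v i) ∧ M.mulVec v = specRad M • v := by
  have : Nonempty (Fin n) := ⟨⟨0, hn⟩⟩
  obtain ⟨r, hr, u, hu, hMu⟩ := exists_perron_of_nonneg hM
  have hu₀ : u ≠ 0 := (pos_of_mem_stdSimplex hu).ne'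
  have hr_spec : r ∈ spectrum ℝ M := (mem_spectrum_iff_exists_mulVec_eq_smul M r).2 ⟨u, hu₀, hMu⟩
  rw [specRad_eq_of_isGreatest hM hr hr_spec]
  exact ⟨hr_spec, u, hu₀, hu.1, hMu⟩
end

section
/- Let A_l and A_u be the strictly block-lower and strictly block-upper triangular parts of a J×J-block matrix A with zero diagonal blocks, and let 𝒜_j (j = 1,...,J) be the layer matrices (identity diagonal blocks except the j-th block row equal to that of A). Then the ordered product 𝒜_J 𝒜_{J-1} ⋯ 𝒜_1 equals (I − A_l)^{-1} A_u provided (I − A_l) is invertible; equivalently, (I − A_l)(𝒜_J ⋯ 𝒜_1) = A_u. -/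
/-!
Write `P_m` for the product of the first `m` layers, the last one leftmost. Multiplying by the
layer of block row `m` recomputes block row `m` as `A P`, leaving every other row alone. By
induction, the rows of blocks `≥ m` of `P_m` are still those of the identity, while every row of a
block `< m` satisfies the Gauss–Seidel equation `P = A_l P + A_u`: in `A P` the strictly upper
part only meets identity rows, and the strictly lower part only meets rows that the new layer does
not touch. For `m = J` this holds in every row, i.e. `(1 - A_l) P_J = A_u`.
-/

open Matrix

theorem List.prod_reverse_map_take_finRange_succ {M : Type*} [Monoid M] {J m : ℕ} (f : Fin J → M)
    (hm : m < J) :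
    (((List.finRange J).take (m + 1)).map f).reverse.prod =
      f ⟨m, hm⟩ * (((List.finRange J).take m).map f).reverse.prod := by
  simp [List.take_add_one, hm]

namespace Matrix

variable {ι R : Type*} {J : ℕ}

section Semiring

variable [Semiring R]

def blockLowerPart (A : Matrix ι ι R) (L : ι → Fin J) : Matrix ι ι R :=
  of fun i k => if L k < L i then A i k else 0

def blockUpperPart (A : Matrix ι ι R) (L : ι → Fin J) : Matrix ι ι R :=
  of fun i k => if L i < L k then A i k else 0

def blockLayer [DecidableEq ι] (A : Matrix ι ι R) (L : ι → Fin J) (j : Fin J) : Matrix ι ι R :=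
  of fun i k => if L i = j then A i k else if i = k then 1 else 0

def layerSweep [Fintype ι] [DecidableEq ι] (A : Matrix ι ι R) (L : ι → Fin J) (m : ℕ) :
    Matrix ι ι R :=
  (((List.finRange J).take m).map (blockLayer A L)).reverse.prod

structure IsPartialSweep [Fintype ι] [DecidableEq ι] (A : Matrix ι ι R) (L : ι → Fin J)
    (m : ℕ) (P : Matrix ι ι R) : Prop where
  row_of_le : ∀ i, m ≤ (L i : ℕ) → P i = (1 : Matrix ι ι R) i
  row_of_lt : ∀ i, (L i : ℕ) < m → P i = (blockLowerPart A L * P) i + blockUpperPart A L i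

variable {A : Matrix ι ι R} {L : ι → Fin J}

theorem blockLowerPart_add_blockUpperPart (hdiag : ∀ i k, L i = L k → A i k = 0) :
    blockLowerPart A L + blockUpperPart A L = A := by
  ext i k
  rcases lt_trichotomy (L i) (L k) with h | h | h
  · simp [blockLowerPart, blockUpperPart, h, h.not_gt]
  · simp [blockLowerPart, blockUpperPart, h, hdiag i k h]
  · simp [blockLowerPart, blockUpperPart, h, h.not_gt]

theorem blockLowerPart_mul_row_congr [Fintype ι] {i : ι} {P Q : Matrix ι ι R}
    (h : ∀ x, L x < L i → P x = Q x) :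
    (blockLowerPart A L * P) i = (blockLowerPart A L * Q) i := by
  ext k
  refine Finset.sum_congr rfl fun x _ => ?_
  by_cases hx : L x < L i
  · dsimp only
    rw [h x hx]
  · simp [blockLowerPart, hx]

variable [Fintype ι] [DecidableEq ι]

theorem blockLayer_mul_row_of_ne {j : Fin J} {i : ι} (hi : L i ≠ j) (P : Matrix ι ι R) :
    (blockLayer A L j * P) i = P i := by
  ext k
  simp [mul_apply, blockLayer, hi, ite_mul]

theorem blockLayer_mul_row_of_eq {j : Fin J} {i : ι} (hi : L i = j) (P : Matrix ι ι R) :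
    (blockLayer A L j * P) i = (A * P) i := by
  ext k
  simp [mul_apply, blockLayer, hi]

theorem blockUpperPart_mul_row_of_one {i : ι} {P : Matrix ι ι R}
    (h : ∀ x, L i < L x → P x = (1 : Matrix ι ι R) x) :
    (blockUpperPart A L * P) i = blockUpperPart A L i := by
  have hrow : (blockUpperPart A L * P) i = (blockUpperPart A L * (1 : Matrix ι ι R)) i := by
    ext k
    refine Finset.sum_congr rfl fun x _ => ?_
    by_cases hx : L i < L x
    · dsimp only
      rw [h x hx]
    · simp [blockUpperPart, hx]
  rw [hrow, Matrix.mul_one]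

theorem isPartialSweep_zero : IsPartialSweep A L 0 1 where
  row_of_le _ _ := rfl
  row_of_lt _ h := absurd h (Nat.not_lt_zero _)

theorem IsPartialSweep.blockLayer_mul (hdiag : ∀ i k, L i = L k → A i k = 0) {m : ℕ}
    {P : Matrix ι ι R} (hP : IsPartialSweep A L m P) (hm : m < J) :
    IsPartialSweep A L (m + 1) (blockLayer A L ⟨m, hm⟩ * P) := by
  have unchanged : ∀ i, (L i : ℕ) ≠ m → (blockLayer A L ⟨m, hm⟩ * P) i = P i :=
    fun i hi => blockLayer_mul_row_of_ne (fun h => hi (by rw [h])) P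
  have lower : ∀ i, (L i : ℕ) ≤ m →
      (blockLowerPart A L * (blockLayer A L ⟨m, hm⟩ * P)) i = (blockLowerPart A L * P) i :=
    fun i hi => blockLowerPart_mul_row_congr fun x hx => unchanged x (by omega)
  constructor
  · intro i hi
    rw [unchanged i (by omega), hP.row_of_le i (by omega)]
  · intro i hi
    rw [lower i (by omega)]
    rcases (Nat.lt_succ_iff_lt_or_eq.mp hi) with hlt | heq
    · rw [unchanged i hlt.ne, hP.row_of_lt i hlt]
    · have hupper : (blockUpperPart A L * P) i = blockUpperPart A L i :=
        blockUpperPart_mul_row_of_one fun x hx => hP.row_of_le x (by omega)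
      have hsplit : A * P = blockLowerPart A L * P + blockUpperPart A L * P := by
        rw [← Matrix.add_mul, blockLowerPart_add_blockUpperPart hdiag]
      rw [blockLayer_mul_row_of_eq (Fin.ext heq), hsplit, ← hupper]
      rfl

theorem isPartialSweep_layerSweep (hdiag : ∀ i k, L i = L k → A i k = 0) :
    ∀ m ≤ J, IsPartialSweep A L m (layerSweep A L m)
  | 0, _ => by simpa [layerSweep] using isPartialSweep_zero
  | m + 1, hm => by
    rw [layerSweep, List.prod_reverse_map_take_finRange_succ _ hm]
    exact (isPartialSweep_layerSweep hdiag m (Nat.le_of_succ_le hm)).blockLayer_mul hdiag hm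

theorem IsPartialSweep.eq_blockLowerPart_mul_add {P : Matrix ι ι R}
    (hP : IsPartialSweep A L J P) : P = blockLowerPart A L * P + blockUpperPart A L :=
  funext fun i => hP.row_of_lt i (L i).isLt

end Semiring

theorem one_sub_blockLowerPart_mul_layerSweep [Fintype ι] [DecidableEq ι] [Ring R]
    {A : Matrix ι ι R} {L : ι → Fin J} (hdiag : ∀ i k, L i = L k → A i k = 0) :
    (1 - blockLowerPart A L) * layerSweep A L J = blockUpperPart A L := by
  have hP := (isPartialSweep_layerSweep hdiag J le_rfl).eq_blockLowerPart_mul_add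
  rw [Matrix.sub_mul, Matrix.one_mul, sub_eq_iff_eq_add', ← hP]

end Matrix

theorem stmt19 {n J : ℕ} (A : Matrix (Fin n) (Fin n) ℝ) (L : Fin n → Fin J)
    (hdiag : ∀ i j, L i = L j → A i j = 0)
    (Al Au : Matrix (Fin n) (Fin n) ℝ)
    (hAl : ∀ i j, Al i j = if L j < L i then A i j else 0)
    (hAu : ∀ i j, Au i j = if L i < L j then A i j else 0)
    (lay : Fin J → Matrix (Fin n) (Fin n) ℝ)
    (hlay : ∀ j i k, (lay j) i k = if L i = j then A i k else if i = k then 1 else 0)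
    (Atil : Matrix (Fin n) (Fin n) ℝ)
    (hAtil : Atil = (((List.finRange J).map lay).reverse).prod)
    (hinv : IsUnit (1 - Al)) :
    (1 - Al) * Atil = Au ∧ Atil = (1 - Al)⁻¹ * Au := by
  have hAl' : Al = blockLowerPart A L := Matrix.ext hAl
  have hAu' : Au = blockUpperPart A L := Matrix.ext hAu
  have hAtil' : Atil = layerSweep A L J := by
    have hlay' : lay = blockLayer A L := funext fun j => Matrix.ext (hlay j)
    rw [hAtil, layerSweep, List.take_of_length_le (List.length_finRange).le, hlay']
  have hsweep : (1 - Al) * Atil = Au := by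
    rw [hAl', hAu', hAtil']
    exact one_sub_blockLowerPart_mul_layerSweep hdiag
  refine ⟨hsweep, ?_⟩
  rw [← hsweep, ← Matrix.mul_assoc, Matrix.nonsing_inv_mul _ ((isUnit_iff_isUnit_det _).mp hinv),
    Matrix.one_mul]
end
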